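/- Under the Moser map M(x,y) = (q,p) with q = −(1−x₀)ȳ − y₀x̄ and p = x̄/(1−x₀) (where x̄=(x₁,x₂,x₃), ȳ=(y₁,y₂,y₃)), the angular momentum pulls back as Lᵢ ∘ M = εᵢⱼₖ xⱼ yₖ, i.e. (q × p) ∘ M = x̄ × ȳ (up to sign convention: Lᵢ∘M = εᵢⱼₖxⱼyₖ). -/

import Mathlib

open scoped RealInnerProductSpace

noncomputable section

abbrev E3 := EuclideanSpace ℝ (Fin 3)
abbrev E4 := EuclideanSpace ℝ (Fin 4)

def tl (x : E4) : E3 := WithLp.toLp 2 (fun i : Fin 3 => x i.succ)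

def moserQ (x y : E4) : E3 := -((1 - x 0) • tl y) - (y 0) • tl x

def moserP (x : E4) : E3 := (1 - x 0)⁻¹ • tl x

/-- Under the Moser map, angular momentum pulls back as Lᵢ∘M = εᵢⱼₖ xⱼ yₖ,
i.e. (q × p) ∘ M = x̄ × ȳ. -/
theorem moser_angular_momentum (x y : E4)
    (hx : ‖x‖ = 1) (hy : ‖y‖ = 1) (hxy : ⟪x, y⟫ = 0) (hx0 : x 0 ≠ 1) :
    crossProduct (moserQ x y : Fin 3 → ℝ) (moserP x : Fin 3 → ℝ) =
      crossProduct (tl x : Fin 3 → ℝ) (tl y : Fin 3 → ℝ) := by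
  have h : (1 : ℝ) - x 0 ≠ 0 := sub_ne_zero.mpr (Ne.symm hx0)
  funext i
  fin_cases i <;>
    simp [crossProduct, moserQ, moserP, tl, PiLp.sub_apply, PiLp.neg_apply,
      PiLp.smul_apply, smul_eq_mul] <;>
    field_simp <;> ring

end
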